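/- arXiv:2508.01876 — 7 statements merged into one kernel-verified Lean document; each statement's English description precedes it below -/
import Mathlib

section
/- Let n ∈ ℕ and let H : [0,∞) → ℝ be positive, strictly decreasing, with H(t) → 0 as t → ∞. Let f¹ : ℝⁿ × ℝ → ℝⁿ be bounded and Lipschitz continuous in its first argument uniformly in the second, and let f² : ℝⁿ × ℝ → ℝ be bounded and continuous. Suppose x : [0,∞) → ℝⁿ and H together solve x'(t) = H(t)·f¹(x(t),t), H'(t) = H(t)²·f²(x(t),t). Fix γ ∈ (0,1). Then there exist constants c > 0 and C > 0 such that for every t* > 0 the following holds: if y : [t*,∞) → ℝⁿ solves the truncated first-order system y'(t) = H(t*)·f¹(y(t),t) with y(t*) = x(t*), then for all t ∈ [t*, t* + c·H(t*)^(−γ)] one has ‖x(t) − y(t)‖ ≤ C·H(t*)^(2−2γ). -/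
open Filter Set

lemma gronwallBound_le_aux {K ε x : ℝ} (hK : 0 ≤ K) (hε : 0 ≤ ε) (hx : 0 ≤ x) :
    gronwallBound 0 K ε x ≤ ε * x * Real.exp (K * x) := by
  rcases eq_or_ne K 0 with h | h
  · subst h
    simp [gronwallBound_K0]
  · rw [gronwallBound_of_K_ne_0 h]
    have hK' : 0 < K := lt_of_le_of_ne hK (Ne.symm h)
    set y := K * x with hy
    have hy0 : 0 ≤ y := mul_nonneg hK hx
    have key : Real.exp y - 1 ≤ y * Real.exp y := by
      have h1 : 1 - y ≤ Real.exp (-y) := by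
        have := Real.add_one_le_exp (-y); linarith
      have h2 : Real.exp y * (1 - y) ≤ Real.exp y * Real.exp (-y) :=
        mul_le_mul_of_nonneg_left h1 (Real.exp_nonneg y)
      rw [← Real.exp_add] at h2
      simp at h2
      nlinarith [Real.exp_pos y]
    have : ε / K * (Real.exp y - 1) ≤ ε / K * (y * Real.exp y) :=
      mul_le_mul_of_nonneg_left key (div_nonneg hε hK)
    calc 0 * Real.exp (K * x) + ε / K * (Real.exp (K * x) - 1)
        = ε / K * (Real.exp y - 1) := by rw [← hy]; ring
      _ ≤ ε / K * (y * Real.exp y) := this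
      _ = ε * x * Real.exp y := by field_simp [hy]; ring

/-- Proposition 4.1 of Fajman et al.: error estimate between the full system
`x' = H·f¹(x,t)`, `H' = H²·f²(x,t)` and the truncated first-order system
`y' = H(t*)·f¹(y,t)` with `y(t*) = x(t*)`. -/
theorem truncated_first_order_error_estimate
    (n : ℕ)
    (H : ℝ → ℝ) (x : ℝ → (Fin n → ℝ))
    (f1 : (Fin n → ℝ) → ℝ → (Fin n → ℝ)) (f2 : (Fin n → ℝ) → ℝ → ℝ)
    (hHpos : ∀ t ≥ (0 : ℝ), 0 < H t)
    (hHdec : StrictAntiOn H (Set.Ici (0 : ℝ)))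
    (hHlim : Tendsto H atTop (nhds 0))
    (hf1bdd : ∃ M : ℝ, ∀ w t, ‖f1 w t‖ ≤ M)
    (hf1lip : ∃ L : NNReal, ∀ t, LipschitzWith L (fun w => f1 w t))
    (hf2bdd : ∃ M : ℝ, ∀ w t, |f2 w t| ≤ M)
    (hf2cont : Continuous fun p : (Fin n → ℝ) × ℝ => f2 p.1 p.2)
    (hx : ∀ t ≥ (0 : ℝ), HasDerivAt x (H t • f1 (x t) t) t)
    (hH : ∀ t ≥ (0 : ℝ), HasDerivAt H ((H t) ^ 2 * f2 (x t) t) t)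
    (γ : ℝ) (hγ : γ ∈ Set.Ioo (0 : ℝ) 1) :
    ∃ c > (0 : ℝ), ∃ C > (0 : ℝ), ∀ tstar > (0 : ℝ), ∀ y : ℝ → (Fin n → ℝ),
      y tstar = x tstar →
      (∀ t ≥ tstar, HasDerivAt y (H tstar • f1 (y t) t) t) →
      ∀ t ∈ Set.Icc tstar (tstar + c * (H tstar) ^ (-γ)),
        ‖x t - y t‖ ≤ C * (H tstar) ^ (2 - 2 * γ) := by
  obtain ⟨M1, hM1⟩ := hf1bdd
  obtain ⟨L, hL⟩ := hf1lip
  obtain ⟨M2, hM2⟩ := hf2bdd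
  have hM1' : 0 ≤ M1 := le_trans (norm_nonneg _) (hM1 0 0)
  have hM2' : 0 ≤ M2 := le_trans (abs_nonneg _) (hM2 0 0)
  set E : ℝ := Real.exp ((L : ℝ) * max 1 (H 0)) with hE
  have hEpos : 0 < E := Real.exp_pos _
  refine ⟨1, one_pos, (M1 + 1) * (M2 + 1) * E, by positivity, ?_⟩
  intro tstar htstar y hy0 hy t ht
  set h := H tstar with hhdef
  have hh : 0 < h := hHpos tstar htstar.le
  have hhγ : 0 < h ^ (-γ) := Real.rpow_pos_of_pos hh _
  set b := tstar + 1 * h ^ (-γ) with hbdef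
  have hbt : tstar ≤ b := by simp only [hbdef, one_mul]; linarith
  have hmem : ∀ s ∈ Icc tstar b, (0 : ℝ) ≤ s := fun s hs => le_trans htstar.le hs.1
  -- H s ≤ h on [tstar, b]
  have hHle : ∀ s ∈ Icc tstar b, H s ≤ h :=
    fun s hs => hHdec.antitoneOn (mem_Ici.2 htstar.le) (mem_Ici.2 (hmem s hs)) hs.1
  have hHpos' : ∀ s ∈ Icc tstar b, 0 < H s := fun s hs => hHpos s (hmem s hs)
  -- Step 1: |H s - h| ≤ (M2 * h^2) * (s - tstar)
  have hHdiff : ∀ s ∈ Icc tstar b, ‖H s - h‖ ≤ (M2 * h ^ 2) * (s - tstar) := by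
    apply norm_image_sub_le_of_norm_deriv_le_segment'
      (f' := fun s => (H s) ^ 2 * f2 (x s) s)
    · intro s hs
      exact (hH s (hmem s hs)).hasDerivWithinAt
    · intro s hs
      have hs' : s ∈ Icc tstar b := ⟨hs.1, hs.2.le⟩
      rw [Real.norm_eq_abs, abs_mul, abs_pow, abs_of_pos (hHpos' s hs')]
      have h1 : (H s) ^ 2 ≤ h ^ 2 := by
        have := hHle s hs'
        nlinarith [hHpos' s hs']
      have h2 : |f2 (x s) s| ≤ M2 := hM2 _ _
      nlinarith [abs_nonneg (f2 (x s) s), pow_pos (hHpos' s hs') 2]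
  -- constants for Gronwall
  set K : ℝ := (L : ℝ) * h with hK
  have hK0 : 0 ≤ K := mul_nonneg L.coe_nonneg hh.le
  set ε : ℝ := M1 * (M2 * h ^ 2) * h ^ (-γ) with hεdef
  have hε0 : 0 ≤ ε := by positivity
  -- Gronwall
  have key : ∀ s ∈ Icc tstar b, ‖x s - y s‖ ≤ gronwallBound 0 K ε (s - tstar) := by
    apply norm_le_gronwallBound_of_norm_deriv_right_le
      (f' := fun s => H s • f1 (x s) s - h • f1 (y s) s)
    · intro s hs
      exact ((hx s (hmem s hs)).sub (hy s hs.1)).continuousAt.continuousWithinAt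
    · intro s hs
      exact ((hx s (le_trans htstar.le hs.1)).sub (hy s hs.1)).hasDerivWithinAt
    · rw [hy0, sub_self, norm_zero]
    · intro s hs
      have hs' : s ∈ Icc tstar b := ⟨hs.1, hs.2.le⟩
      have hsplit : H s • f1 (x s) s - h • f1 (y s) s
          = H s • (f1 (x s) s - f1 (y s) s) + (H s - h) • f1 (y s) s := by
        rw [smul_sub, sub_smul]; abel
      rw [hsplit]
      refine le_trans (norm_add_le _ _) (add_le_add ?_ ?_)
      · rw [norm_smul, Real.norm_eq_abs, abs_of_pos (hHpos' s hs')]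
        have hlip : ‖f1 (x s) s - f1 (y s) s‖ ≤ (L : ℝ) * ‖x s - y s‖ := by
          have := (hL s).dist_le_mul (x s) (y s)
          rwa [dist_eq_norm, dist_eq_norm] at this
        calc H s * ‖f1 (x s) s - f1 (y s) s‖
            ≤ h * ((L : ℝ) * ‖x s - y s‖) :=
              mul_le_mul (hHle s hs') hlip (norm_nonneg _) hh.le
          _ = K * ‖x s - y s‖ := by rw [hK]; ring
      · rw [norm_smul]
        have h1 : ‖H s - h‖ ≤ (M2 * h ^ 2) * (s - tstar) := hHdiff s hs'
        have h2 : s - tstar ≤ h ^ (-γ) := by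
          have := hs'.2; simp only [hbdef, one_mul] at this; linarith
        have h3 : ‖f1 (y s) s‖ ≤ M1 := hM1 _ _
        calc ‖H s - h‖ * ‖f1 (y s) s‖
            ≤ ((M2 * h ^ 2) * (h ^ (-γ))) * M1 := by
              have h4 : ‖H s - h‖ ≤ (M2 * h ^ 2) * (h ^ (-γ)) :=
                h1.trans (mul_le_mul_of_nonneg_left h2 (by positivity))
              exact mul_le_mul h4 h3 (norm_nonneg _) (by positivity)
          _ = ε := by rw [hεdef]; ring
  -- now finish
  have ht' : t ∈ Icc tstar b := ht
  have htt : 0 ≤ t - tstar := by linarith [ht'.1]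
  have htb : t - tstar ≤ h ^ (-γ) := by
    have := ht'.2; simp only [hbdef, one_mul] at this; linarith
  have hexp : Real.exp (K * (t - tstar)) ≤ E := by
    apply Real.exp_le_exp.2
    have hpow : h * h ^ (-γ) ≤ max 1 (H 0) := by
      have heq : h ^ ((1 : ℝ) - γ) = h * h ^ (-γ) := by
        rw [sub_eq_add_neg, Real.rpow_add hh, Real.rpow_one]
      rw [← heq]
      rcases le_or_gt h 1 with hc | hc
      · exact le_trans (Real.rpow_le_one hh.le hc (by linarith [hγ.2])) (le_max_left _ _)
      · have hH0 : h ≤ H 0 := (hHdec (mem_Ici.2 le_rfl) (mem_Ici.2 htstar.le) htstar).le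
        have : h ^ (1 - γ) ≤ h ^ (1 : ℝ) :=
          Real.rpow_le_rpow_of_exponent_le hc.le (by linarith [hγ.1])
        rw [Real.rpow_one] at this
        exact le_trans this (le_trans hH0 (le_max_right _ _))
    calc K * (t - tstar) ≤ K * h ^ (-γ) := mul_le_mul_of_nonneg_left htb hK0
      _ = (L : ℝ) * (h * h ^ (-γ)) := by rw [hK]; ring
      _ ≤ (L : ℝ) * max 1 (H 0) := mul_le_mul_of_nonneg_left hpow L.coe_nonneg
  have hfin : ‖x t - y t‖ ≤ ε * (h ^ (-γ)) * E := by
    refine le_trans (key t ht') (le_trans (gronwallBound_le_aux hK0 hε0 htt) ?_)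
    have h1 : ε * (t - tstar) ≤ ε * h ^ (-γ) := mul_le_mul_of_nonneg_left htb hε0
    exact mul_le_mul h1 hexp (Real.exp_nonneg _) (by positivity)
  have hpow2 : ε * h ^ (-γ) = (M1 * M2) * h ^ (2 - 2 * γ) := by
    rw [hεdef]
    have : h ^ (2 : ℕ) * h ^ (-γ) * h ^ (-γ) = h ^ (2 - 2 * γ) := by
      rw [← Real.rpow_natCast h 2, ← Real.rpow_add hh, ← Real.rpow_add hh]
      congr 1
      push_cast
      ring
    calc M1 * (M2 * h ^ 2) * h ^ (-γ) * h ^ (-γ)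
        = (M1 * M2) * (h ^ (2 : ℕ) * h ^ (-γ) * h ^ (-γ)) := by ring
      _ = (M1 * M2) * h ^ (2 - 2 * γ) := by rw [this]
  rw [hpow2] at hfin
  have hhp : 0 < h ^ (2 - 2 * γ) := Real.rpow_pos_of_pos hh _
  refine hfin.trans ?_
  nlinarith [hEpos, hhp, mul_pos hhp hEpos, hM1', hM2']
end

section
/- Consider the Interaction 2 guiding system F : {(Σ,Ω) : Σ² ≠ 1} → ℝ², F(Σ,Ω) = ((3/2)·Σ·(−γ(Σ²+Ω²−1)+2Σ²+Ω²−2), (1/2)·Ω·(Γ̄·(Σ²+Ω²−1)/(Σ²−1) − 3γ(Σ²+Ω²−1) + 6Σ² + 3Ω² − 3)), with parameters γ ∈ [0,2] and Γ̄ ∈ ℝ. Then (0,0) is an equilibrium point, the Jacobian matrix of F at (0,0) is the diagonal matrix with diagonal entries 3(γ−2)/2 and (Γ̄+3γ−3)/2, and both entries are negative if and only if 0 ≤ γ < 2 and Γ̄ < −3(γ−1) (so (0,0) is a hyperbolic sink exactly under these conditions). -/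
/-!
Each component of the field is a coordinate times a factor that is smooth near the origin (the
singular denominator `Σ² - 1` equals `-1` there). Since the coordinate vanishes at the origin, the
product rule leaves only the value of the factor times the coordinate projection.
-/

theorem HasFDerivAt.mul_of_eq_zero {E : Type*} [NormedAddCommGroup E] [NormedSpace ℝ E]
    {u g : E → ℝ} {u' : E →L[ℝ] ℝ} {x : E} (hu : HasFDerivAt u u' x)
    (hg : DifferentiableAt ℝ g x) (hx : u x = 0) :
    HasFDerivAt (fun y => u y * g y) (g x • u') x := by
  have h := hu.mul hg.hasFDerivAt
  rwa [hx, zero_smul, zero_add] at h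

noncomputable def interaction2Field (γ Γ : ℝ) (p : ℝ × ℝ) : ℝ × ℝ :=
  ((3 / 2) * p.1 * (-γ * (p.1 ^ 2 + p.2 ^ 2 - 1) + 2 * p.1 ^ 2 + p.2 ^ 2 - 2),
   (1 / 2) * p.2 * (Γ * (p.1 ^ 2 + p.2 ^ 2 - 1) / (p.1 ^ 2 - 1)
     - 3 * γ * (p.1 ^ 2 + p.2 ^ 2 - 1) + 6 * p.1 ^ 2 + 3 * p.2 ^ 2 - 3))

theorem interaction2Field_origin (γ Γ : ℝ) : interaction2Field γ Γ (0, 0) = (0, 0) := by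
  simp [interaction2Field]

theorem hasFDerivAt_interaction2Field_origin (γ Γ : ℝ) :
    HasFDerivAt (interaction2Field γ Γ)
      (((3 * (γ - 2) / 2) • ContinuousLinearMap.id ℝ ℝ).prodMap
        (((Γ + 3 * γ - 3) / 2) • ContinuousLinearMap.id ℝ ℝ)) (0, 0) := by
  have h₁ := ((hasFDerivAt_fst (𝕜 := ℝ) (p := ((0 : ℝ), (0 : ℝ)))).const_mul (3 / 2)).mul_of_eq_zero
    (g := fun p : ℝ × ℝ => -γ * (p.1 ^ 2 + p.2 ^ 2 - 1) + 2 * p.1 ^ 2 + p.2 ^ 2 - 2)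
    (by fun_prop) (by simp)
  have h₂ := ((hasFDerivAt_snd (𝕜 := ℝ) (p := ((0 : ℝ), (0 : ℝ)))).const_mul (1 / 2)).mul_of_eq_zero
    (g := fun p : ℝ × ℝ => Γ * (p.1 ^ 2 + p.2 ^ 2 - 1) / (p.1 ^ 2 - 1)
      - 3 * γ * (p.1 ^ 2 + p.2 ^ 2 - 1) + 6 * p.1 ^ 2 + 3 * p.2 ^ 2 - 3)
    (by fun_prop (disch := norm_num)) (by simp)
  refine (h₁.prodMk h₂).congr_fderiv ?_
  ext <;> simp <;> ring

theorem interaction2_origin_eigenvalues_neg_iff {γ : ℝ} (hγ : 0 ≤ γ) (Γ : ℝ) :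
    (3 * (γ - 2) / 2 < 0 ∧ (Γ + 3 * γ - 3) / 2 < 0) ↔ (0 ≤ γ ∧ γ < 2 ∧ Γ < -3 * (γ - 1)) := by
  constructor
  · rintro ⟨h₁, h₂⟩
    exact ⟨hγ, by linarith, by linarith⟩
  · rintro ⟨-, h₁, h₂⟩
    exact ⟨by linarith, by linarith⟩

theorem interaction2_origin_equilibrium_stability_general
    (γ Γ : ℝ) (hγ0 : 0 ≤ γ)
    (F : ℝ × ℝ → ℝ × ℝ)
    (hF : ∀ p : ℝ × ℝ, F p =
      ((3 / 2) * p.1 * (-γ * (p.1 ^ 2 + p.2 ^ 2 - 1) + 2 * p.1 ^ 2 + p.2 ^ 2 - 2),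
       (1 / 2) * p.2 * (Γ * (p.1 ^ 2 + p.2 ^ 2 - 1) / (p.1 ^ 2 - 1)
         - 3 * γ * (p.1 ^ 2 + p.2 ^ 2 - 1) + 6 * p.1 ^ 2 + 3 * p.2 ^ 2 - 3))) :
    F (0, 0) = (0, 0) ∧
    HasFDerivAt F
      (((3 * (γ - 2) / 2) • ContinuousLinearMap.id ℝ ℝ).prodMap
        (((Γ + 3 * γ - 3) / 2) • ContinuousLinearMap.id ℝ ℝ)) (0, 0) ∧
    ((3 * (γ - 2) / 2 < 0 ∧ (Γ + 3 * γ - 3) / 2 < 0) ↔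
      (0 ≤ γ ∧ γ < 2 ∧ Γ < -3 * (γ - 1))) := by
  obtain rfl : F = interaction2Field γ Γ := funext hF
  exact ⟨interaction2Field_origin γ Γ, hasFDerivAt_interaction2Field_origin γ Γ,
    interaction2_origin_eigenvalues_neg_iff hγ0 Γ⟩

/-- Interaction 2 guiding system: `(0,0)` is an equilibrium, its Jacobian is
`diag(3(γ−2)/2, (Γ̄+3γ−3)/2)`, and both eigenvalues are negative iff
`0 ≤ γ < 2` and `Γ̄ < −3(γ−1)` (hyperbolic sink exactly then). -/
theorem interaction2_origin_equilibrium_stability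
    (γ Γ : ℝ) (hγ0 : 0 ≤ γ) (hγ2 : γ ≤ 2)
    (F : ℝ × ℝ → ℝ × ℝ)
    (hF : ∀ p : ℝ × ℝ, F p =
      ((3 / 2) * p.1 * (-γ * (p.1 ^ 2 + p.2 ^ 2 - 1) + 2 * p.1 ^ 2 + p.2 ^ 2 - 2),
       (1 / 2) * p.2 * (Γ * (p.1 ^ 2 + p.2 ^ 2 - 1) / (p.1 ^ 2 - 1)
         - 3 * γ * (p.1 ^ 2 + p.2 ^ 2 - 1) + 6 * p.1 ^ 2 + 3 * p.2 ^ 2 - 3))) :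
    F (0, 0) = (0, 0) ∧
    HasFDerivAt F
      (((3 * (γ - 2) / 2) • ContinuousLinearMap.id ℝ ℝ).prodMap
        (((Γ + 3 * γ - 3) / 2) • ContinuousLinearMap.id ℝ ℝ)) (0, 0) ∧
    ((3 * (γ - 2) / 2 < 0 ∧ (Γ + 3 * γ - 3) / 2 < 0) ↔
      (0 ≤ γ ∧ γ < 2 ∧ Γ < -3 * (γ - 1))) :=
  interaction2_origin_equilibrium_stability_general γ Γ hγ0 F hF
end

section
/- Consider the Interaction 2 guiding system F : {(Σ,Ω) : Σ² ≠ 1} → ℝ², F(Σ,Ω) = ((3/2)·Σ·(−γ(Σ²+Ω²−1)+2Σ²+Ω²−2), (1/2)·Ω·(Γ̄·(Σ²+Ω²−1)/(Σ²−1) − 3γ(Σ²+Ω²−1) + 6Σ² + 3Ω² − 3)), with parameters γ ∈ [0,2] and Γ̄ ∈ ℝ. Then (0,1) is an equilibrium point, the Jacobian matrix of F at (0,1) is the diagonal matrix with diagonal entries −3/2 and 3 − 3γ − Γ̄, and both entries are negative if and only if Γ̄ > −3(γ−1) (so (0,1) is a hyperbolic sink exactly for Γ̄ > −3(γ−1)).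 -/
/-!
Both components of the vector field are products with a factor vanishing at `(0, 1)`: `Σ` in
the first, the bracket of `Ω'` in the second. By the product rule their derivatives there are
the value of the other factor times the derivative of the vanishing one, so the Jacobian is
diagonal. Writing the bracket as `(Σ² + Ω² - 1) (Γ̄ / (Σ² - 1) - 3γ + 3) + 3Σ²`, its
derivative at `(0, 1)` is `(3 - 3γ - Γ̄) · 2 dΩ`.
-/

open ContinuousLinearMap

section
variable {𝕜 E : Type*} [NontriviallyNormedField 𝕜] [NormedAddCommGroup E] [NormedSpace 𝕜 E]
  {u v : E → 𝕜} {p : E}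

theorem HasFDerivAt.mul_of_left_eq_zero {u' : E →L[𝕜] 𝕜} (hu : HasFDerivAt u u' p)
    (hv : DifferentiableAt 𝕜 v p) (hu0 : u p = 0) :
    HasFDerivAt (fun q => u q * v q) (v p • u') p := by
  refine (hu.mul hv.hasFDerivAt).congr_fderiv ?_
  ext
  simp [hu0]

theorem HasFDerivAt.mul_of_right_eq_zero {v' : E →L[𝕜] 𝕜} (hu : DifferentiableAt 𝕜 u p)
    (hv : HasFDerivAt v v' p) (hv0 : v p = 0) :
    HasFDerivAt (fun q => u q * v q) (u p • v') p := by
  refine (hu.hasFDerivAt.mul hv).congr_fderiv ?_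
  ext
  simp [hv0]

end

theorem HasFDerivAt.prodMk_diag {𝕜 : Type*} [NontriviallyNormedField 𝕜] {f g : 𝕜 × 𝕜 → 𝕜}
    {a b : 𝕜} {p : 𝕜 × 𝕜} (hf : HasFDerivAt f (a • fst 𝕜 𝕜 𝕜) p)
    (hg : HasFDerivAt g (b • snd 𝕜 𝕜 𝕜) p) :
    HasFDerivAt (fun q => (f q, g q))
      ((a • ContinuousLinearMap.id 𝕜 𝕜).prodMap (b • ContinuousLinearMap.id 𝕜 𝕜)) p := by
  refine (hf.prodMk hg).congr_fderiv ?_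
  ext <;> simp

theorem hasFDerivAt_sq_add_sq (p : ℝ × ℝ) :
    HasFDerivAt (fun q : ℝ × ℝ => q.1 ^ 2 + q.2 ^ 2)
      ((2 * p.1) • fst ℝ ℝ ℝ + (2 * p.2) • snd ℝ ℝ ℝ) p := by
  refine ((hasFDerivAt_fst.pow 2).add (hasFDerivAt_snd.pow 2)).congr_fderiv ?_
  ext <;> simp

namespace Interaction2

theorem hasFDerivAt_omega_bracket (γ Γ : ℝ) :
    HasFDerivAt (fun p : ℝ × ℝ => Γ * (p.1 ^ 2 + p.2 ^ 2 - 1) / (p.1 ^ 2 - 1)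
         - 3 * γ * (p.1 ^ 2 + p.2 ^ 2 - 1) + 6 * p.1 ^ 2 + 3 * p.2 ^ 2 - 3)
      ((2 * (3 - 3 * γ - Γ)) • snd ℝ ℝ ℝ) (0, 1) := by
  have hs : HasFDerivAt (fun p : ℝ × ℝ => p.1 ^ 2 + p.2 ^ 2 - 1) ((2 : ℝ) • snd ℝ ℝ ℝ) (0, 1) := by
    simpa using (hasFDerivAt_sq_add_sq (0, 1)).sub_const 1
  have hc : DifferentiableAt ℝ (fun p : ℝ × ℝ => Γ / (p.1 ^ 2 - 1) - 3 * γ + 3) (0, 1) := by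
    fun_prop (disch := norm_num)
  have hbracket : (fun p : ℝ × ℝ => Γ * (p.1 ^ 2 + p.2 ^ 2 - 1) / (p.1 ^ 2 - 1)
      - 3 * γ * (p.1 ^ 2 + p.2 ^ 2 - 1) + 6 * p.1 ^ 2 + 3 * p.2 ^ 2 - 3) =
      fun p => (p.1 ^ 2 + p.2 ^ 2 - 1) * (Γ / (p.1 ^ 2 - 1) - 3 * γ + 3) + 3 * p.1 ^ 2 := by
    funext p
    ring
  rw [hbracket]
  refine ((hs.mul_of_left_eq_zero hc (by norm_num)).add
    ((hasFDerivAt_fst.pow 2).const_mul 3)).congr_fderiv ?_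
  ext <;> simp
  ring

theorem hasFDerivAt_sigma_component (γ : ℝ) :
    HasFDerivAt (fun p : ℝ × ℝ =>
      (3 / 2) * p.1 * (-γ * (p.1 ^ 2 + p.2 ^ 2 - 1) + 2 * p.1 ^ 2 + p.2 ^ 2 - 2))
      ((-3 / 2 : ℝ) • fst ℝ ℝ ℝ) (0, 1) := by
  have hv : DifferentiableAt ℝ (fun p : ℝ × ℝ =>
      -γ * (p.1 ^ 2 + p.2 ^ 2 - 1) + 2 * p.1 ^ 2 + p.2 ^ 2 - 2) (0, 1) := by
    fun_prop
  refine ((hasFDerivAt_fst.const_mul (3 / 2 : ℝ)).mul_of_left_eq_zero hv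
    (by norm_num)).congr_fderiv ?_
  ext <;> simp
  norm_num

theorem hasFDerivAt_omega_component (γ Γ : ℝ) :
    HasFDerivAt (fun p : ℝ × ℝ =>
      (1 / 2) * p.2 * (Γ * (p.1 ^ 2 + p.2 ^ 2 - 1) / (p.1 ^ 2 - 1)
         - 3 * γ * (p.1 ^ 2 + p.2 ^ 2 - 1) + 6 * p.1 ^ 2 + 3 * p.2 ^ 2 - 3))
      ((3 - 3 * γ - Γ) • snd ℝ ℝ ℝ) (0, 1) := by
  have hu : DifferentiableAt ℝ (fun p : ℝ × ℝ => (1 / 2 : ℝ) * p.2) (0, 1) := by fun_prop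
  refine ((hasFDerivAt_omega_bracket γ Γ).mul_of_right_eq_zero hu
    (by norm_num)).congr_fderiv ?_
  ext <;> simp

end Interaction2

theorem interaction2_scalar_field_point_stability_general
    (γ Γ : ℝ)
    (F : ℝ × ℝ → ℝ × ℝ)
    (hF : ∀ p : ℝ × ℝ, F p =
      ((3 / 2) * p.1 * (-γ * (p.1 ^ 2 + p.2 ^ 2 - 1) + 2 * p.1 ^ 2 + p.2 ^ 2 - 2),
       (1 / 2) * p.2 * (Γ * (p.1 ^ 2 + p.2 ^ 2 - 1) / (p.1 ^ 2 - 1)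
         - 3 * γ * (p.1 ^ 2 + p.2 ^ 2 - 1) + 6 * p.1 ^ 2 + 3 * p.2 ^ 2 - 3))) :
    F (0, 1) = (0, 0) ∧
    HasFDerivAt F
      (((-3 / 2 : ℝ) • ContinuousLinearMap.id ℝ ℝ).prodMap
        ((3 - 3 * γ - Γ) • ContinuousLinearMap.id ℝ ℝ)) (0, 1) ∧
    (((-3 / 2 : ℝ) < 0 ∧ 3 - 3 * γ - Γ < 0) ↔ Γ > -3 * (γ - 1)) := by
  refine ⟨by rw [hF]; norm_num, ?_, ?_⟩
  · rw [funext hF]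
    exact (Interaction2.hasFDerivAt_sigma_component γ).prodMk_diag
      (Interaction2.hasFDerivAt_omega_component γ Γ)
  · exact ⟨fun h => by linarith [h.2], fun h => ⟨by norm_num, by linarith⟩⟩

/-- Interaction 2 guiding system: `(0,1)` is an equilibrium, its Jacobian is
`diag(−3/2, 3−3γ−Γ̄)`, and both eigenvalues are negative iff `Γ̄ > −3(γ−1)`
(hyperbolic sink exactly then). -/
theorem interaction2_scalar_field_point_stability
    (γ Γ : ℝ) (hγ0 : 0 ≤ γ) (hγ2 : γ ≤ 2)
    (F : ℝ × ℝ → ℝ × ℝ)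
    (hF : ∀ p : ℝ × ℝ, F p =
      ((3 / 2) * p.1 * (-γ * (p.1 ^ 2 + p.2 ^ 2 - 1) + 2 * p.1 ^ 2 + p.2 ^ 2 - 2),
       (1 / 2) * p.2 * (Γ * (p.1 ^ 2 + p.2 ^ 2 - 1) / (p.1 ^ 2 - 1)
         - 3 * γ * (p.1 ^ 2 + p.2 ^ 2 - 1) + 6 * p.1 ^ 2 + 3 * p.2 ^ 2 - 3))) :
    F (0, 1) = (0, 0) ∧
    HasFDerivAt F
      (((-3 / 2 : ℝ) • ContinuousLinearMap.id ℝ ℝ).prodMap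
        ((3 - 3 * γ - Γ) • ContinuousLinearMap.id ℝ ℝ)) (0, 1) ∧
    (((-3 / 2 : ℝ) < 0 ∧ 3 - 3 * γ - Γ < 0) ↔ Γ > -3 * (γ - 1)) :=
  interaction2_scalar_field_point_stability_general γ Γ F hF
end

section
/- Consider the Interaction 4 guiding system F : ℝ² → ℝ², F(Σ,Ω) = ((3/2)·Σ·(−γ(Σ²+Ω²−1)+2Σ²+Ω²−2), (1/2)·Ω·(Γ̄ − 3γ(Σ²+Ω²−1) + 6Σ² + 3Ω² − 3)), with parameters γ and Γ̄ satisfying 1 < γ ≤ 2 and −3(γ−1) < Γ̄ ≤ 0. Set Ω₆ := √(1 + Γ̄/(3(γ−1))). Then (0,Ω₆) is an equilibrium point of F, the Jacobian matrix of F at (0,Ω₆) is the diagonal matrix with diagonal entries −(Γ̄+3)/2 and −Γ̄ − 3γ + 3, and under the stated hypotheses both entries are negative, so (0,Ω₆) is a hyperbolic sink. -/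
/-!
The guiding system has the form `(Σ', Ω') = (Σ·g, Ω·h)` with `g`, `h` quadratic in `Σ`, `Ω` and
depending on `Σ` only through `Σ²`. At a point `(0, y)` of the axis `Σ = 0` the Jacobian of such a
field is therefore diagonal, `diag(g(0,y), h(0,y) + y·∂h/∂Ω)`. The equilibrium `P₆` is the point of
that axis where `h` vanishes, i.e. `3(γ-1)Ω₆² = 3(γ-1) + Γ̄`; substituting this relation turns the
diagonal into `(-(Γ̄+3)/2, -(3(γ-1)+Γ̄))`, and both entries are negative because `Γ̄ > -3(γ-1) ≥ -3`.
-/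

open ContinuousLinearMap

theorem hasFDerivAt_mul_fst_prod_mul_snd_of_fst_eq_zero {g h : ℝ × ℝ → ℝ}
    {g' : ℝ × ℝ →L[ℝ] ℝ} {c y : ℝ}
    (hg : HasFDerivAt g g' (0, y)) (hh : HasFDerivAt h (c • snd ℝ ℝ ℝ) (0, y)) :
    HasFDerivAt (fun q : ℝ × ℝ => (q.1 * g q, q.2 * h q))
      ((g (0, y) • fst ℝ ℝ ℝ).prod ((h (0, y) + y * c) • snd ℝ ℝ ℝ)) (0, y) := by
  refine ((hasFDerivAt_fst.mul hg).prodMk (hasFDerivAt_snd.mul hh)).congr_fderiv ?_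
  ext <;> simp; ring

theorem hasFDerivAt_even_quadratic_of_fst_eq_zero (a b c y : ℝ) :
    HasFDerivAt (fun q : ℝ × ℝ => a * q.1 ^ 2 + b * q.2 ^ 2 + c) ((2 * b * y) • snd ℝ ℝ ℝ)
      (0, y) := by
  have hfst := (hasFDerivAt_fst (𝕜 := ℝ) (p := ((0 : ℝ), y))).pow 2
  have hsnd := (hasFDerivAt_snd (𝕜 := ℝ) (p := ((0 : ℝ), y))).pow 2
  refine (((hfst.const_mul a).add (hsnd.const_mul b)).add_const c).congr_fderiv ?_
  ext <;> simp; ring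

theorem prodMap_smul_id_eq_prod (a b : ℝ) :
    (a • ContinuousLinearMap.id ℝ ℝ).prodMap (b • ContinuousLinearMap.id ℝ ℝ) =
      (a • fst ℝ ℝ ℝ).prod (b • snd ℝ ℝ ℝ) := by
  ext <;> simp

theorem interaction4_P6_sink_general
    (γ Γ : ℝ) (hγ1 : 1 < γ) (hγ2 : γ ≤ 2)
    (hΓlo : -3 * (γ - 1) < Γ)
    (Ω₆ : ℝ) (hΩ₆ : Ω₆ = Real.sqrt (1 + Γ / (3 * (γ - 1))))
    (F : ℝ × ℝ → ℝ × ℝ)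
    (hF : ∀ p : ℝ × ℝ, F p =
      ((3 / 2) * p.1 * (-γ * (p.1 ^ 2 + p.2 ^ 2 - 1) + 2 * p.1 ^ 2 + p.2 ^ 2 - 2),
       (1 / 2) * p.2 * (Γ - 3 * γ * (p.1 ^ 2 + p.2 ^ 2 - 1)
         + 6 * p.1 ^ 2 + 3 * p.2 ^ 2 - 3))) :
    F (0, Ω₆) = (0, 0) ∧
    HasFDerivAt F
      (((-(Γ + 3) / 2) • ContinuousLinearMap.id ℝ ℝ).prodMap
        ((-Γ - 3 * γ + 3) • ContinuousLinearMap.id ℝ ℝ)) (0, Ω₆) ∧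
    -(Γ + 3) / 2 < 0 ∧ -Γ - 3 * γ + 3 < 0 := by
  have hγ : 0 < 3 * (γ - 1) := by linarith
  have hΩ₆_sq : 3 * (γ - 1) * Ω₆ ^ 2 = 3 * (γ - 1) + Γ := by
    have hrad : 0 ≤ 1 + Γ / (3 * (γ - 1)) := by
      rw [← neg_le_iff_add_nonneg', le_div_iff₀ hγ]
      linarith
    rw [hΩ₆, Real.sq_sqrt hrad, mul_add, mul_one, mul_div_cancel₀ _ hγ.ne']
  have hF_factored : F = fun q : ℝ × ℝ =>
      (q.1 * ((3 / 2 * (2 - γ)) * q.1 ^ 2 + (3 / 2 * (1 - γ)) * q.2 ^ 2 + 3 / 2 * (γ - 2)),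
       q.2 * ((3 - 3 / 2 * γ) * q.1 ^ 2 + (3 / 2 * (1 - γ)) * q.2 ^ 2 + (Γ + 3 * γ - 3) / 2)) := by
    funext q
    rw [hF]
    ext <;> ring
  refine ⟨?_, ?_, by linarith, by linarith⟩
  · rw [hF]
    ext
    · simp
    · linear_combination (-Ω₆ / 2) * hΩ₆_sq
  · rw [prodMap_smul_id_eq_prod, hF_factored]
    refine (hasFDerivAt_mul_fst_prod_mul_snd_of_fst_eq_zero
      (hasFDerivAt_even_quadratic_of_fst_eq_zero _ _ _ Ω₆)
      (hasFDerivAt_even_quadratic_of_fst_eq_zero _ _ _ Ω₆)).congr_fderiv ?_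
    congr 2
    · linear_combination (-1 / 2) * hΩ₆_sq
    · linear_combination (-3 / 2) * hΩ₆_sq

/-- Interaction 4 guiding system: for `1 < γ ≤ 2` and `−3(γ−1) < Γ̄ ≤ 0`, the point
`P₆ = (0, √(1 + Γ̄/(3(γ−1))))` is an equilibrium, its Jacobian is
`diag(−(Γ̄+3)/2, −Γ̄−3γ+3)`, and both eigenvalues are negative, so it is a
hyperbolic sink. -/
theorem interaction4_P6_sink
    (γ Γ : ℝ) (hγ1 : 1 < γ) (hγ2 : γ ≤ 2)
    (hΓlo : -3 * (γ - 1) < Γ) (hΓhi : Γ ≤ 0)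
    (Ω₆ : ℝ) (hΩ₆ : Ω₆ = Real.sqrt (1 + Γ / (3 * (γ - 1))))
    (F : ℝ × ℝ → ℝ × ℝ)
    (hF : ∀ p : ℝ × ℝ, F p =
      ((3 / 2) * p.1 * (-γ * (p.1 ^ 2 + p.2 ^ 2 - 1) + 2 * p.1 ^ 2 + p.2 ^ 2 - 2),
       (1 / 2) * p.2 * (Γ - 3 * γ * (p.1 ^ 2 + p.2 ^ 2 - 1)
         + 6 * p.1 ^ 2 + 3 * p.2 ^ 2 - 3))) :
    F (0, Ω₆) = (0, 0) ∧
    HasFDerivAt F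
      (((-(Γ + 3) / 2) • ContinuousLinearMap.id ℝ ℝ).prodMap
        ((-Γ - 3 * γ + 3) • ContinuousLinearMap.id ℝ ℝ)) (0, Ω₆) ∧
    -(Γ + 3) / 2 < 0 ∧ -Γ - 3 * γ + 3 < 0 :=
  interaction4_P6_sink_general γ Γ hγ1 hγ2 hΓlo Ω₆ hΩ₆ F hF
end

section
/- Consider the Interaction 5 guiding system F : {(Σ,Ω) : Ω ≠ 0} → ℝ², F(Σ,Ω) = ((3/2)·Σ·(−γ(Σ²+Ω²−1)+2Σ²+Ω²−2), −((Σ²−1)·Γ̄ + 3Ω²·(γ(Σ²+Ω²−1)−2Σ²−Ω²+1))/(2Ω)), with parameters γ ≠ 1 and Γ̄ ∈ ℝ. If Ω₀ > 0 satisfies the quartic equation 3(γ−1)·Ω₀⁴ − 3(γ−1)·Ω₀² − Γ̄ = 0, then (0,Ω₀) is an equilibrium point of F. In particular, whenever 9 + 12Γ̄/(γ−1) ≥ 0, the two values Ω₀² = (3 + √(9 + 12Γ̄/(γ−1)))/6 and Ω₀² = (3 − √(9 + 12Γ̄/(γ−1)))/6 (when positive) yield equilibrium points P₇ and P₈ respectively.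 -/
/-- Interaction 5 guiding system: any `Ω₀ > 0` satisfying the quartic
`3(γ−1)Ω₀⁴ − 3(γ−1)Ω₀² − Γ̄ = 0` gives an equilibrium point `(0,Ω₀)`; in
particular, when `9 + 12Γ̄/(γ−1) ≥ 0`, the values
`Ω₀² = (3 ± √(9 + 12Γ̄/(γ−1)))/6` (when positive) yield the equilibria `P₇`, `P₈`. -/
theorem interaction5_equilibria
    (γ Γ : ℝ) (hγ : γ ≠ 1)
    (F : ℝ × ℝ → ℝ × ℝ)
    (hF : ∀ p : ℝ × ℝ, F p =
      ((3 / 2) * p.1 * (-γ * (p.1 ^ 2 + p.2 ^ 2 - 1) + 2 * p.1 ^ 2 + p.2 ^ 2 - 2),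
       -((p.1 ^ 2 - 1) * Γ
          + 3 * p.2 ^ 2 * (γ * (p.1 ^ 2 + p.2 ^ 2 - 1) - 2 * p.1 ^ 2 - p.2 ^ 2 + 1))
         / (2 * p.2))) :
    (∀ Ω₀ : ℝ, 0 < Ω₀ →
      3 * (γ - 1) * Ω₀ ^ 4 - 3 * (γ - 1) * Ω₀ ^ 2 - Γ = 0 →
      F (0, Ω₀) = (0, 0)) ∧
    (9 + 12 * Γ / (γ - 1) ≥ 0 →
      (∀ Ω₀ : ℝ, 0 < Ω₀ →
        Ω₀ ^ 2 = (3 + Real.sqrt (9 + 12 * Γ / (γ - 1))) / 6 →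
        F (0, Ω₀) = (0, 0)) ∧
      (∀ Ω₀ : ℝ, 0 < Ω₀ →
        Ω₀ ^ 2 = (3 - Real.sqrt (9 + 12 * Γ / (γ - 1))) / 6 →
        F (0, Ω₀) = (0, 0))) := by
  have hγ' : γ - 1 ≠ 0 := sub_ne_zero.mpr hγ
  have key : ∀ Ω₀ : ℝ, 0 < Ω₀ →
      3 * (γ - 1) * Ω₀ ^ 4 - 3 * (γ - 1) * Ω₀ ^ 2 - Γ = 0 →
      F (0, Ω₀) = (0, 0) := by
    intro Ω₀ hΩ hq
    rw [hF]
    simp only [Prod.mk.injEq]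
    constructor
    · ring
    · rw [div_eq_zero_iff]
      left
      nlinarith [hq]
  refine ⟨key, fun hD => ?_⟩
  have hs : Real.sqrt (9 + 12 * Γ / (γ - 1)) ^ 2 = 9 + 12 * Γ / (γ - 1) :=
    Real.sq_sqrt hD
  have hΓ : 12 * Γ / (γ - 1) * (γ - 1) = 12 * Γ := div_mul_cancel₀ _ hγ'
  constructor
  · intro Ω₀ hΩ h2
    apply key Ω₀ hΩ
    have : Ω₀ ^ 4 = ((3 + Real.sqrt (9 + 12 * Γ / (γ - 1))) / 6) ^ 2 := by
      rw [← h2]; ring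
    linear_combination 3*(γ-1)*this - 3*(γ-1)*h2 + (γ-1)/12*hs + (1/12)*hΓ
  · intro Ω₀ hΩ h2
    apply key Ω₀ hΩ
    have : Ω₀ ^ 4 = ((3 - Real.sqrt (9 + 12 * Γ / (γ - 1))) / 6) ^ 2 := by
      rw [← h2]; ring
    linear_combination 3*(γ-1)*this - 3*(γ-1)*h2 + (γ-1)/12*hs + (1/12)*hΓ
end

section
/- Consider the Interaction 6 guiding system F : ℝ² → ℝ², F(Σ,Ω) = ((3/2)·Σ·(−γ(Σ²+Ω²−1)+2Σ²+Ω²−2), (3/2)·Ω·(−γΣ² + γ + Ω²·(−γ+m+1) + 2Σ² − 1)), with parameters γ and m such that (1−γ)/(1+m−γ) > 0. Set Ω₉ := √((1−γ)/(1+m−γ)). Then (0,Ω₉) is an equilibrium point of F, and the Jacobian matrix of F at (0,Ω₉) is the diagonal matrix with diagonal entries 3(γ + (γ−2)m − 1)/(2(1+m−γ)) and 3 − 3γ. -/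
/-!
The field is polynomial, so its Jacobian can be written down entrywise. Both off-diagonal
entries carry a factor `Σ`, so the Jacobian is diagonal on the invariant axis `Σ = 0`. At `P₉`
the relation `(1 + m - γ) Ω₉² = 1 - γ` makes the second component of `F` vanish and turns the
diagonal entries into the stated values.
-/

open ContinuousLinearMap

noncomputable def interaction6Field (γ m : ℝ) (p : ℝ × ℝ) : ℝ × ℝ :=
  ((3 / 2) * p.1 * (-γ * (p.1 ^ 2 + p.2 ^ 2 - 1) + 2 * p.1 ^ 2 + p.2 ^ 2 - 2),
   (3 / 2) * p.2 * (-γ * p.1 ^ 2 + γ + p.2 ^ 2 * (-γ + m + 1) + 2 * p.1 ^ 2 - 1))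

noncomputable def interaction6Jacobian (γ m : ℝ) (p : ℝ × ℝ) : ℝ × ℝ →L[ℝ] ℝ × ℝ :=
  ((3 / 2 * (3 * (2 - γ) * p.1 ^ 2 + (1 - γ) * p.2 ^ 2 + γ - 2)) • fst ℝ ℝ ℝ
      + (3 * (1 - γ) * p.1 * p.2) • snd ℝ ℝ ℝ).prod
    ((3 * (2 - γ) * p.1 * p.2) • fst ℝ ℝ ℝ
      + (3 / 2 * ((2 - γ) * p.1 ^ 2 + γ - 1 + 3 * (1 + m - γ) * p.2 ^ 2)) • snd ℝ ℝ ℝ)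

theorem hasFDerivAt_interaction6Field (γ m : ℝ) (p : ℝ × ℝ) :
    HasFDerivAt (interaction6Field γ m) (interaction6Jacobian γ m p) p := by
  have hx : HasFDerivAt (fun q : ℝ × ℝ => q.1) (fst ℝ ℝ ℝ) p := hasFDerivAt_fst
  have hy : HasFDerivAt (fun q : ℝ × ℝ => q.2) (snd ℝ ℝ ℝ) p := hasFDerivAt_snd
  -- The trees below mirror the parenthesisation in `interaction6Field`, so the ascription
  -- `HasFDerivAt (interaction6Field γ m) _ p` holds by unfolding.
  have h₁ := (hx.const_mul (3 / 2 : ℝ)).mul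
    (((((hx.pow 2).add (hy.pow 2)).sub_const 1).const_mul (-γ) |>.add
      ((hx.pow 2).const_mul 2)).add (hy.pow 2) |>.sub_const 2)
  have h₂ := (hy.const_mul (3 / 2 : ℝ)).mul
    (((((hx.pow 2).const_mul (-γ)).add_const γ).add ((hy.pow 2).mul_const (-γ + m + 1))).add
      ((hx.pow 2).const_mul 2) |>.sub_const 1)
  refine (h₁.prodMk h₂ : HasFDerivAt (interaction6Field γ m) _ p).congr_fderiv ?_
  ext <;>
    simp only [interaction6Jacobian, Nat.add_one_sub_one, pow_one, nsmul_eq_mul, Nat.cast_ofNat,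
      smul_add, neg_smul, smul_neg, Pi.add_apply, neg_mul, comp_apply, inl_apply, inr_apply,
      ContinuousLinearMap.prod_apply, add_apply, neg_apply, smul_apply, coe_fst', coe_snd',
      smul_eq_mul, mul_one, mul_zero, neg_zero, zero_add, add_zero] <;>
    ring

theorem interaction6Field_zero_left (γ m y : ℝ) :
    interaction6Field γ m (0, y) = (0, 3 / 2 * y * ((1 + m - γ) * y ^ 2 - (1 - γ))) := by
  simp only [interaction6Field, Prod.mk.injEq]
  constructor <;> ring

theorem interaction6Jacobian_zero_left (γ m y : ℝ) :
    interaction6Jacobian γ m (0, y) =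
      ((3 / 2 * ((1 - γ) * y ^ 2 + γ - 2)) • ContinuousLinearMap.id ℝ ℝ).prodMap
        ((3 / 2 * (γ - 1 + 3 * (1 + m - γ) * y ^ 2)) • ContinuousLinearMap.id ℝ ℝ) := by
  ext <;> simp [interaction6Jacobian]

/-- Interaction 6 guiding system: when `(1−γ)/(1+m−γ) > 0`, the point
`P₉ = (0, √((1−γ)/(1+m−γ)))` is an equilibrium and the Jacobian there is
`diag(3(γ + (γ−2)m − 1)/(2(1+m−γ)), 3 − 3γ)`. -/
theorem interaction6_P9_equilibrium
    (γ m : ℝ) (hpos : 0 < (1 - γ) / (1 + m - γ))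
    (Ω₉ : ℝ) (hΩ₉ : Ω₉ = Real.sqrt ((1 - γ) / (1 + m - γ)))
    (F : ℝ × ℝ → ℝ × ℝ)
    (hF : ∀ p : ℝ × ℝ, F p =
      ((3 / 2) * p.1 * (-γ * (p.1 ^ 2 + p.2 ^ 2 - 1) + 2 * p.1 ^ 2 + p.2 ^ 2 - 2),
       (3 / 2) * p.2 * (-γ * p.1 ^ 2 + γ + p.2 ^ 2 * (-γ + m + 1)
         + 2 * p.1 ^ 2 - 1))) :
    F (0, Ω₉) = (0, 0) ∧
    HasFDerivAt F
      (((3 * (γ + (γ - 2) * m - 1) / (2 * (1 + m - γ))) •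
          ContinuousLinearMap.id ℝ ℝ).prodMap
        ((3 - 3 * γ) • ContinuousLinearMap.id ℝ ℝ)) (0, Ω₉) := by
  obtain rfl : F = interaction6Field γ m := funext hF
  have hden : 1 + m - γ ≠ 0 := fun h => by simp [h] at hpos
  have hsq : Ω₉ ^ 2 = (1 - γ) / (1 + m - γ) := hΩ₉ ▸ Real.sq_sqrt hpos.le
  refine ⟨?_, ?_⟩
  · rw [interaction6Field_zero_left, hsq, mul_div_cancel₀ _ hden, sub_self, mul_zero]
  · convert hasFDerivAt_interaction6Field γ m (0, Ω₉) using 1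
    rw [interaction6Jacobian_zero_left, hsq]
    congr 3 <;> field_simp <;> ring
end

section
/- Consider the Interaction 9 guiding system F : {(Σ,Ω) : Σ² ≠ 1} → ℝ², F(Σ,Ω) = ((3/2)·Σ·(−γ(Σ²+Ω²−1)+2Σ²+Ω²−2), (3/2)·Ω·(−(γ−2)Σ² + γ + Ω²·(−γ+m+1) + m·Ω⁴/(Σ²−1) − 1)), with parameters γ and m ≠ 0 satisfying (1−γ)/m > 0. Set Ω_N := √((1−γ)/m). Then (0,Ω_N) is an equilibrium point of F, and the Jacobian matrix of F at (0,Ω_N) is the diagonal matrix with diagonal entries 3((γ−1)² + (γ−2)m)/(2m) and −3(γ−1)(γ+m−1)/m. -/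
/-!
The field is odd in `Σ` in its first component and even in `Σ` in its second. Hence on the axis
`Σ = 0` the first component vanishes identically and the second has zero `Σ`-derivative, so the
Jacobian at `(0, Ω_N)` is diagonal and its entries are one-variable derivatives along the two
axes. On the axis, `Ω' = (3/2) Ω (1 - Ω²) (m Ω² - (1 - γ))`, which vanishes at `Ω_N`; the
diagonal entries follow by substituting `m Ω_N² = 1 - γ`.
-/

section Calculus

variable {𝕜 F : Type*} [NontriviallyNormedField 𝕜] [NormedAddCommGroup F] [NormedSpace 𝕜 F]

theorem Function.Even.hasDerivAt_zero [IsAddTorsionFree F] {f : 𝕜 → F} (hf : f.Even)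
    (hd : DifferentiableAt 𝕜 f 0) : HasDerivAt f 0 0 := by
  have h : deriv f 0 = -deriv f 0 := by
    simpa only [hf _, neg_zero] using deriv_comp_neg f 0
  simpa [self_eq_neg.mp h] using hd.hasDerivAt

open ContinuousLinearMap in
theorem HasFDerivAt.prodMap_of_partials {f : 𝕜 × 𝕜 → 𝕜 × 𝕜} {p : 𝕜 × 𝕜} {a b : 𝕜}
    (hf : DifferentiableAt 𝕜 f p) (ha : HasDerivAt (fun x ↦ f (x, p.2)) (a, 0) p.1)
    (hb : HasDerivAt (fun y ↦ f (p.1, y)) (0, b) p.2) :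
    HasFDerivAt f
      ((a • ContinuousLinearMap.id 𝕜 𝕜).prodMap (b • ContinuousLinearMap.id 𝕜 𝕜)) p := by
  refine hf.hasFDerivAt.congr_fderiv (prod_ext (ext_ring ?_) (ext_ring ?_))
  · simpa using DFunLike.congr_fun
      ((hf.hasFDerivAt.comp p.1 (hasFDerivAt_prodMk_left p.1 p.2)).unique ha.hasFDerivAt) 1
  · simpa using DFunLike.congr_fun
      ((hf.hasFDerivAt.comp p.2 (hasFDerivAt_prodMk_right p.1 p.2)).unique hb.hasFDerivAt) 1

end Calculus

noncomputable def interaction9Field (γ m : ℝ) (p : ℝ × ℝ) : ℝ × ℝ :=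
  ((3 / 2) * p.1 * (-γ * (p.1 ^ 2 + p.2 ^ 2 - 1) + 2 * p.1 ^ 2 + p.2 ^ 2 - 2),
   (3 / 2) * p.2 * (-(γ - 2) * p.1 ^ 2 + γ + p.2 ^ 2 * (-γ + m + 1)
     + m * p.2 ^ 4 / (p.1 ^ 2 - 1) - 1))

namespace interaction9Field

variable (γ m : ℝ)

theorem apply_zero_left (y : ℝ) :
    interaction9Field γ m (0, y) =
      (0, 3 / 2 * ((γ - 1) * y + (1 - γ + m) * y ^ 3 - m * y ^ 5)) := by
  simp only [interaction9Field]
  ext <;> ring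

theorem apply_zero_left_eq_zero {y : ℝ} (hy : m * y ^ 2 = 1 - γ) :
    interaction9Field γ m (0, y) = (0, 0) := by
  rw [apply_zero_left, Prod.mk.injEq]
  exact ⟨rfl, by linear_combination 3 / 2 * y * (1 - y ^ 2) * hy⟩

theorem differentiableAt {p : ℝ × ℝ} (hp : p.1 ^ 2 ≠ 1) :
    DifferentiableAt ℝ (interaction9Field γ m) p := by
  unfold interaction9Field
  have : p.1 ^ 2 - 1 ≠ 0 := sub_ne_zero.mpr hp
  fun_prop (disch := assumption)

theorem hasDerivAt_left_zero (y : ℝ) :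
    HasDerivAt (fun x ↦ interaction9Field γ m (x, y))
      (3 / 2 * ((1 - γ) * y ^ 2 + γ - 2), 0) 0 := by
  refine HasDerivAt.prodMk ?_ ?_
  · have hA : DifferentiableAt ℝ
        (fun x : ℝ ↦ -γ * (x ^ 2 + y ^ 2 - 1) + 2 * x ^ 2 + y ^ 2 - 2) 0 := by
      fun_prop
    exact (((hasDerivAt_id' 0).const_mul (3 / 2)).fun_mul hA.hasDerivAt).congr_deriv (by ring)
  · refine Function.Even.hasDerivAt_zero (fun x ↦ ?_) ?_
    · simp
    · exact (differentiableAt γ m (by simp)).snd.comp 0 (by fun_prop)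

theorem hasDerivAt_right_zero (y : ℝ) :
    HasDerivAt (fun y ↦ interaction9Field γ m (0, y))
      (0, 3 / 2 * ((γ - 1) + 3 * (1 - γ + m) * y ^ 2 - 5 * m * y ^ 4)) y := by
  simp only [apply_zero_left]
  refine (hasDerivAt_const y 0).prodMk ?_
  exact ((((hasDerivAt_id' y).const_mul (γ - 1)).add
    ((hasDerivAt_pow 3 y).const_mul (1 - γ + m))).sub
    ((hasDerivAt_pow 5 y).const_mul m)).const_mul (3 / 2) |>.congr_deriv (by ring)

end interaction9Field

/-- Interaction 9 guiding system: when `m ≠ 0` and `(1−γ)/m > 0`, the point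
`N₁ = (0, √((1−γ)/m))` is an equilibrium and the Jacobian there is
`diag(3((γ−1)² + (γ−2)m)/(2m), −3(γ−1)(γ+m−1)/m)`. -/
theorem interaction9_N1_equilibrium
    (γ m : ℝ) (hm : m ≠ 0) (hpos : 0 < (1 - γ) / m)
    (ΩN : ℝ) (hΩN : ΩN = Real.sqrt ((1 - γ) / m))
    (F : ℝ × ℝ → ℝ × ℝ)
    (hF : ∀ p : ℝ × ℝ, F p =
      ((3 / 2) * p.1 * (-γ * (p.1 ^ 2 + p.2 ^ 2 - 1) + 2 * p.1 ^ 2 + p.2 ^ 2 - 2),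
       (3 / 2) * p.2 * (-(γ - 2) * p.1 ^ 2 + γ + p.2 ^ 2 * (-γ + m + 1)
         + m * p.2 ^ 4 / (p.1 ^ 2 - 1) - 1))) :
    F (0, ΩN) = (0, 0) ∧
    HasFDerivAt F
      (((3 * ((γ - 1) ^ 2 + (γ - 2) * m) / (2 * m)) •
          ContinuousLinearMap.id ℝ ℝ).prodMap
        ((-3 * (γ - 1) * (γ + m - 1) / m) • ContinuousLinearMap.id ℝ ℝ)) (0, ΩN) := by
  obtain rfl : F = interaction9Field γ m := funext hF
  have hΩ : ΩN ^ 2 = (1 - γ) / m := hΩN ▸ Real.sq_sqrt hpos.le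
  have hmΩ : m * ΩN ^ 2 = 1 - γ := by rw [hΩ]; field_simp
  have hJ₁₁ : 3 * ((γ - 1) ^ 2 + (γ - 2) * m) / (2 * m) =
      3 / 2 * ((1 - γ) * ΩN ^ 2 + γ - 2) := by
    rw [hΩ]; field_simp; ring
  have hJ₂₂ : -3 * (γ - 1) * (γ + m - 1) / m =
      3 / 2 * ((γ - 1) + 3 * (1 - γ + m) * ΩN ^ 2 - 5 * m * ΩN ^ 4) := by
    rw [show ΩN ^ 4 = (ΩN ^ 2) ^ 2 by ring, hΩ]; field_simp; ring
  rw [hJ₁₁, hJ₂₂]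
  exact ⟨interaction9Field.apply_zero_left_eq_zero γ m hmΩ,
    .prodMap_of_partials (interaction9Field.differentiableAt γ m (by simp))
      (interaction9Field.hasDerivAt_left_zero γ m ΩN)
      (interaction9Field.hasDerivAt_right_zero γ m ΩN)⟩
end
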